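/- arXiv:2412.17468 — 2 statements merged into one kernel-verified Lean document; each statement's English description precedes it below -/
import Mathlib

section
/- Let G and H be finite simple graphs with no isolated vertices, with the same number of vertices, and let C be a coloring satisfying the degree assumption. Suppose the sets of colors appearing in G and H are equal, the multisets of colored edges E^C(G) and E^C(H) are equal, but the multisets of vertex colors {{C(u) : u ∈ V(G)}} and {{C(v) : v ∈ V(H)}} differ. Then a contradiction follows; that is, equality of colored edge multisets together with equality of the underlying color sets forces equality of the vertex-color multisets. -/
open Multiset Finset

private def sym2ToM {α : Type*} : Sym2 α → Multiset α :=
  Sym2.lift ⟨fun a b => {a, b}, fun a b => by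
    exact Multiset.cons_swap a b {}⟩

private lemma sym2ToM_mk {α : Type*} (a b : α) : sym2ToM s(a, b) = {a, b} := rfl

private lemma sym2ToM_map {α β : Type*} (f : α → β) (e : Sym2 α) :
    sym2ToM (Sym2.map f e) = (sym2ToM e).map f := by
  induction e using Sym2.inductionOn
  simp [sym2ToM_mk]

private lemma count_edges_bind {V : Type*} [Fintype V] [DecidableEq V]
    (G : SimpleGraph V) [DecidableRel G.Adj] (v : V) :
    Multiset.count v (G.edgeFinset.val.bind sym2ToM) = G.degree v := by
  rw [Multiset.count_bind]
  rw [← SimpleGraph.card_incidenceFinset_eq_degree]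
  rw [SimpleGraph.incidenceFinset_eq_filter]
  rw [Finset.card_filter]
  rw [Finset.sum]
  congr 1
  apply Multiset.map_congr rfl
  intro e he
  rw [Finset.mem_val, SimpleGraph.mem_edgeFinset] at he
  induction e using Sym2.inductionOn with
  | hf a b =>
    have hab : a ≠ b := (G.mem_edgeSet.mp he).ne
    rw [sym2ToM_mk]
    by_cases hva : v = a <;> by_cases hvb : v = b <;>
      simp_all [Multiset.count_cons, Multiset.count_singleton, Sym2.mem_iff]

private lemma card_filter_multiset {V : Type*} [Fintype V] [DecidableEq V]
    (m : Multiset V) (p : V → Prop) [DecidablePred p] :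
    Multiset.card (m.filter p) = ∑ v ∈ Finset.univ.filter p, m.count v := by
  rw [Finset.sum_filter]
  have h : ∀ v ∈ Finset.univ, (if p v then m.count v else 0) = (m.filter p).count v := by
    intro v _
    rw [Multiset.count_filter]
  rw [Finset.sum_congr rfl h]
  rw [show ∑ v ∈ Finset.univ, (m.filter p).count v = ∑ v ∈ Finset.univ, (m.filter p).count v from rfl]
  rw [← Multiset.toFinset_sum_count_eq (m.filter p)]
  exact Finset.sum_subset (Finset.subset_univ _) (fun x _ hx =>
    Multiset.count_eq_zero_of_notMem (fun h => hx (Multiset.mem_toFinset.mpr h)))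

private lemma count_colored {V χ : Type*} [Fintype V] [DecidableEq χ]
    (G : SimpleGraph V) [DecidableRel G.Adj] (C : V → χ) (c : χ) :
    Multiset.count c ((G.edgeFinset.val.map (Sym2.map C)).bind sym2ToM)
      = ∑ v ∈ Finset.univ.filter (fun v => c = C v), G.degree v := by
  classical
  rw [Multiset.bind_map]
  have : (G.edgeFinset.val.bind fun e => sym2ToM (Sym2.map C e))
      = (G.edgeFinset.val.bind sym2ToM).map C := by
    rw [Multiset.map_bind]
    exact Multiset.bind_congr (fun e _ => sym2ToM_map C e)
  rw [this, Multiset.count_map, card_filter_multiset]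
  exact Finset.sum_congr rfl (fun v hv => by
    rw [count_edges_bind])

/-- Let `G`, `H` be finite simple graphs with no isolated vertices and with the same
number of vertices, colored by a coloring satisfying the degree assumption. If the sets
of colors appearing in `G` and `H` are equal and the multisets of colored edges are
equal, then the multisets of vertex colors are also equal. -/
theorem stmt_8 {V W χ : Type*} [Fintype V] [Fintype W]
    (G : SimpleGraph V) (H : SimpleGraph W) [DecidableRel G.Adj] [DecidableRel H.Adj]
    (CG : V → χ) (CH : W → χ)
    (hGiso : ∀ v : V, 0 < G.degree v) (hHiso : ∀ w : W, 0 < H.degree w)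
    (hcard : Fintype.card V = Fintype.card W)
    (hdegG : ∀ u v : V, CG u = CG v → G.degree u = G.degree v)
    (hdegH : ∀ u v : W, CH u = CH v → H.degree u = H.degree v)
    (hdegGH : ∀ (u : V) (w : W), CG u = CH w → G.degree u = H.degree w)
    (hrange : Set.range CG = Set.range CH)
    (hE : G.edgeFinset.val.map (Sym2.map CG) = H.edgeFinset.val.map (Sym2.map CH)) :
    Finset.univ.val.map CG = Finset.univ.val.map CH := by
  classical
  rw [Multiset.ext]
  intro c
  rw [Multiset.count_map, Multiset.count_map]
  have hGc : Multiset.card (Finset.univ.val.filter (fun v => c = CG v))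
      = (Finset.univ.filter (fun v => c = CG v)).card := rfl
  have hHc : Multiset.card (Finset.univ.val.filter (fun w => c = CH w))
      = (Finset.univ.filter (fun w => c = CH w)).card := rfl
  rw [hGc, hHc]
  have key : ∑ v ∈ Finset.univ.filter (fun v => c = CG v), G.degree v
      = ∑ w ∈ Finset.univ.filter (fun w => c = CH w), H.degree w := by
    rw [← count_colored G CG c, ← count_colored H CH c, hE]
  by_cases hc : c ∈ Set.range CG
  · obtain ⟨u, hu⟩ := hc
    have hc' : c ∈ Set.range CH := hrange ▸ ⟨u, hu⟩
    obtain ⟨w, hw⟩ := hc'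
    have hd : G.degree u = H.degree w := hdegGH u w (hu.trans hw.symm)
    have hGsum : ∑ v ∈ Finset.univ.filter (fun v => c = CG v), G.degree v
        = (Finset.univ.filter (fun v => c = CG v)).card * G.degree u := by
      rw [Finset.sum_congr rfl (fun v hv => hdegG v u
        (((Finset.mem_filter.mp hv).2).symm.trans hu.symm))]
      rw [Finset.sum_const, smul_eq_mul]
    have hHsum : ∑ v ∈ Finset.univ.filter (fun w => c = CH w), H.degree v
        = (Finset.univ.filter (fun w => c = CH w)).card * H.degree w := by
      rw [Finset.sum_congr rfl (fun v hv => hdegH v w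
        (((Finset.mem_filter.mp hv).2).symm.trans hw.symm))]
      rw [Finset.sum_const, smul_eq_mul]
    rw [hGsum, hHsum, ← hd] at key
    exact Nat.eq_of_mul_eq_mul_right (hGiso u) key
  · have hc' : c ∉ Set.range CH := hrange ▸ hc
    have h1 : Finset.univ.filter (fun v => c = CG v) = ∅ := by
      apply Finset.filter_eq_empty_iff.mpr
      exact fun v _ h => hc ⟨v, h.symm⟩
    have h2 : Finset.univ.filter (fun w => c = CH w) = ∅ := by
      apply Finset.filter_eq_empty_iff.mpr
      exact fun w _ h => hc' ⟨w, h.symm⟩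
    rw [h1, h2]
    rfl
end

section
/- Let G and H be finite simple graphs with no isolated vertices, and let C be a coloring satisfying the degree assumption, defined on the vertices of both graphs. If G and H have a different number of vertices, have equal numbers of vertices but some color in G does not appear in H, or have equal vertex counts and equal color sets but distinct vertex-color multisets, then the multisets of colored edges E^C(G) and E^C(H) are distinct or the vertex counts differ; in particular the pair (number of vertices, E^C(·)) distinguishes G from H. -/
open Finset Multiset

noncomputable def sym2Mul {α : Type*} : Sym2 α → Multiset α :=
  Sym2.lift ⟨fun a b => {a, b}, fun a b => Multiset.cons_swap a b {}⟩

@[simp] lemma sym2Mul_mk {α : Type*} (a b : α) : sym2Mul (s(a, b)) = {a, b} := rfl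

lemma sym2Mul_map {α β : Type*} (f : α → β) (e : Sym2 α) :
    sym2Mul (Sym2.map f e) = (sym2Mul e).map f := by
  induction e using Sym2.ind with
  | _ a b => simp

lemma count_sym2Mul {α : Type*} [DecidableEq α] (v : α) (e : Sym2 α) (he : ¬ e.IsDiag) :
    Multiset.count v (sym2Mul e) = if v ∈ e then 1 else 0 := by
  induction e using Sym2.ind with
  | _ a b =>
    simp only [Sym2.isDiag_iff_proj_eq] at he
    simp only [sym2Mul_mk, Sym2.mem_iff]
    rw [Multiset.insert_eq_cons, Multiset.count_cons, Multiset.count_singleton]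
    rcases eq_or_ne v a with rfl | ha <;> rcases eq_or_ne v b with rfl | hb <;>
      simp_all

lemma card_filter_eq_sum {V : Type*} [Fintype V] [DecidableEq V] (p : V → Prop)
    [DecidablePred p] (m : Multiset V) :
    Multiset.card (m.filter p) = ∑ v : V, if p v then m.count v else 0 := by
  induction m using Multiset.induction with
  | empty => simp
  | cons a m ih =>
    rw [Multiset.filter_cons]
    by_cases h : p a
    · simp only [h, if_pos, Multiset.card_add, Multiset.card_singleton, ih,
        Multiset.count_cons]
      rw [show (∑ v : V, if p v then m.count v + (if v = a then 1 else 0) else 0)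
          = (∑ v : V, ((if p v then m.count v else 0) + if p v ∧ v = a then 1 else 0)) from
        Finset.sum_congr rfl (by intro v _; split <;> simp_all), Finset.sum_add_distrib]
      rw [add_comm]
      congr 1
      rw [Finset.sum_congr rfl (fun x _ => show (if p x ∧ x = a then (1:ℕ) else 0)
          = if x = a then 1 else 0 by rcases eq_or_ne x a with rfl | hx <;> simp_all)]
      simp
    · simp only [h, if_neg, Multiset.count_cons, ih, zero_add, not_false_iff]
      refine (Finset.sum_congr rfl ?_).symm
      intro v _
      split
      · rename_i hp; rw [if_neg]; · simp
        rintro rfl; exact h hp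
      · rfl

lemma count_endpoints {V : Type*} [Fintype V] [DecidableEq V] (G : SimpleGraph V)
    [DecidableRel G.Adj] (v : V) :
    Multiset.count v (G.edgeFinset.val.bind sym2Mul) = G.degree v := by
  rw [Multiset.count_bind, ← SimpleGraph.card_incidenceFinset_eq_degree,
    SimpleGraph.incidenceFinset_eq_filter, Finset.card_filter]
  rw [show (Multiset.map (fun e => Multiset.count v (sym2Mul e)) G.edgeFinset.val).sum
      = ∑ e ∈ G.edgeFinset, Multiset.count v (sym2Mul e) from rfl]
  refine Finset.sum_congr rfl fun e he => ?_
  rw [count_sym2Mul]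
  exact G.not_isDiag_of_mem_edgeSet (SimpleGraph.mem_edgeFinset.mp he)

lemma count_color {V χ : Type*} [Fintype V] [DecidableEq V] [DecidableEq χ]
    (G : SimpleGraph V) [DecidableRel G.Adj] (C : V → χ) (c : χ) :
    Multiset.count c ((G.edgeFinset.val.map (Sym2.map C)).bind sym2Mul)
      = ∑ v : V, if c = C v then G.degree v else 0 := by
  rw [Multiset.bind_map]
  rw [show (G.edgeFinset.val.bind fun e => sym2Mul (Sym2.map C e))
      = (G.edgeFinset.val.bind sym2Mul).map C by
    simp only [Multiset.map_bind, sym2Mul_map]]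
  rw [Multiset.count_map, card_filter_eq_sum]
  exact Finset.sum_congr rfl fun v _ => by
    split <;> simp [count_endpoints]


/-- Let `G`, `H` be finite simple graphs with no isolated vertices, colored by a coloring
satisfying the degree assumption. If the vertex counts differ, or some color of `G` is
missing in `H`, or the color sets agree but the vertex-color multisets differ, then the
pair (number of vertices, multiset of colored edges) distinguishes `G` from `H`. -/
theorem stmt_15 {V W χ : Type*} [Fintype V] [Fintype W]
    (G : SimpleGraph V) (H : SimpleGraph W) [DecidableRel G.Adj] [DecidableRel H.Adj]
    (CG : V → χ) (CH : W → χ)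
    (hGiso : ∀ v : V, 0 < G.degree v) (hHiso : ∀ w : W, 0 < H.degree w)
    (hdegG : ∀ u v : V, CG u = CG v → G.degree u = G.degree v)
    (hdegH : ∀ u v : W, CH u = CH v → H.degree u = H.degree v)
    (hdegGH : ∀ (u : V) (w : W), CG u = CH w → G.degree u = H.degree w)
    (hcase :
      Fintype.card V ≠ Fintype.card W
      ∨ (Fintype.card V = Fintype.card W ∧ ∃ u : V, CG u ∉ Set.range CH)
      ∨ (Fintype.card V = Fintype.card W ∧ Set.range CG = Set.range CH ∧
          Finset.univ.val.map CG ≠ Finset.univ.val.map CH)) :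
    ¬ (Fintype.card V = Fintype.card W ∧
        G.edgeFinset.val.map (Sym2.map CG) = H.edgeFinset.val.map (Sym2.map CH)) := by
  classical
  rintro ⟨hcard, hedge⟩
  have key : ∀ c : χ, (∑ v : V, if c = CG v then G.degree v else 0)
      = ∑ w : W, if c = CH w then H.degree w else 0 := by
    intro c
    rw [← count_color G CG c, ← count_color H CH c, hedge]
  rcases hcase with h | ⟨-, u, hu⟩ | ⟨-, hr, hne⟩
  · exact h hcard
  · have h0 : (∑ w : W, if CG u = CH w then H.degree w else 0) = 0 := by
      refine Finset.sum_eq_zero fun w _ => ?_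
      rw [if_neg]; exact fun h => hu ⟨w, h.symm⟩
    have h1 : 0 < ∑ v : V, if CG u = CG v then G.degree v else 0 := by
      refine lt_of_lt_of_le (hGiso u) ?_
      have := Finset.single_le_sum (f := fun v => if CG u = CG v then G.degree v else 0)
        (fun v _ => Nat.zero_le _) (Finset.mem_univ u)
      simpa using this
    rw [key (CG u), h0] at h1
    exact absurd h1 (lt_irrefl 0)
  · apply hne
    ext c
    rw [Multiset.count_map, Multiset.count_map]
    show (Finset.univ.filter (fun a => c = CG a)).card
        = (Finset.univ.filter (fun a => c = CH a)).card
    by_cases hc : c ∈ Set.range CG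
    · obtain ⟨u, hu⟩ := hc
      obtain ⟨w, hw⟩ : c ∈ Set.range CH := hr ▸ ⟨u, hu⟩
      set d := G.degree u with hd
      have hdpos : 0 < d := hGiso u
      have hwd : H.degree w = d := (hdegGH u w (hu.trans hw.symm)).symm
      have hGsum : (∑ v : V, if c = CG v then G.degree v else 0)
          = (Finset.univ.filter (fun v => c = CG v)).card * d := by
        rw [← Finset.sum_filter]
        rw [Finset.sum_congr rfl fun v hv => hdegG v u
          ((Finset.mem_filter.mp hv).2.symm.trans hu.symm)]
        rw [Finset.sum_const, smul_eq_mul]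
      have hHsum : (∑ w' : W, if c = CH w' then H.degree w' else 0)
          = (Finset.univ.filter (fun w' => c = CH w')).card * d := by
        rw [← Finset.sum_filter]
        rw [Finset.sum_congr rfl fun w' hw' => (hdegH w' w
          ((Finset.mem_filter.mp hw').2.symm.trans hw.symm)).trans hwd]
        rw [Finset.sum_const, smul_eq_mul]
      have := key c
      rw [hGsum, hHsum] at this
      exact Nat.eq_of_mul_eq_mul_right hdpos this
    · have h1 : Finset.univ.filter (fun a => c = CG a) = ∅ := by
        refine Finset.filter_eq_empty_iff.mpr fun v _ h => hc ⟨v, h.symm⟩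
      have h2 : Finset.univ.filter (fun a => c = CH a) = ∅ := by
        refine Finset.filter_eq_empty_iff.mpr fun w _ h => hc (hr ▸ (⟨w, h.symm⟩ : c ∈ Set.range CH))
      rw [h1, h2]
      rfl
end
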